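/- If M and M' are discrete probability distributions on a common countable support that are ε-antipodal for some ε ≥ 0, then D_KL(M‖M') = D_KL(M'‖M). -/

import Mathlib

open scoped ENNReal

/-- The probability that a discrete distribution `P` assigns to a set `S`. -/
noncomputable def pmfProb {α : Type*} (P : PMF α) (S : Set α) : ℝ≥0∞ :=
  ∑' x, S.indicator (fun y => P y) x

/-- The (exponentiated) max divergence `exp (D_∞(P‖Q)) = sup_S P(S)/Q(S)`;
`D_∞(P‖Q) ≤ ε` is expressed as `DinfExp P Q ≤ ENNReal.ofReal (exp ε)`. -/
noncomputable def DinfExp {α : Type*} (P Q : PMF α) : ℝ≥0∞ :=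
  ⨆ S : Set α, pmfProb P S / pmfProb Q S

/-- The KL divergence `D_KL(P‖Q) = Σ_x P(x) ln (P(x)/Q(x))`. -/
noncomputable def KL {α : Type*} (P Q : PMF α) : ℝ :=
  ∑' x, (P x).toReal * Real.log ((P x).toReal / (Q x).toReal)

/-!
Write `p = M x`, `q = M' x` and `r = log (p / q)`. Termwise,
`p log (p/q) - q log (q/p) = (p + q) r`, and on the support `p = e^r q`, so
`(p + q) r = (p - q) · r coth (r / 2)`. The function `r ↦ r coth (r / 2)` is even, hence
constant on `{-ε, ε}` (and the factor `p - q` vanishes where `r = 0`). The difference of the two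
KL divergences is therefore a constant multiple of `∑ (p - q) = 1 - 1 = 0`.
-/

open Real

/-- `ε coth (ε / 2)`; its junk value `0` at `ε = 0` is harmless, since there it only ever
multiplies `p - q = 0`. -/
noncomputable def mulCothHalf (ε : ℝ) : ℝ :=
  ε * (exp ε + 1) / (exp ε - 1)

theorem add_mul_eq_mulCothHalf_mul_sub {p q ε : ℝ} (h : p = exp ε * q) :
    (p + q) * ε = mulCothHalf ε * (p - q) := by
  rcases eq_or_ne ε 0 with rfl | hε
  · simp [mulCothHalf]
  · have hexp : exp ε - 1 ≠ 0 := sub_ne_zero.mpr ((exp_eq_one_iff ε).not.mpr hε)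
    rw [mulCothHalf, h]
    field_simp

theorem mul_log_div_eq_of_log_div_mem {p q ε : ℝ} (hp : 0 < p) (hq : 0 < q)
    (h : log (p / q) ∈ ({-ε, 0, ε} : Set ℝ)) :
    p * log (p / q) = q * log (q / p) + mulCothHalf ε * (p - q) := by
  have hpq : p = exp (log (p / q)) * q := by
    rw [exp_log (div_pos hp hq), div_mul_cancel₀ _ hq.ne']
  rw [← inv_div p q, log_inv]
  obtain h | h | h : _ = -ε ∨ _ = 0 ∨ _ = ε := h <;> rw [h] at hpq ⊢
  · have hqp : q = exp ε * p := by rw [hpq, ← mul_assoc, ← exp_add]; simp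
    linarith [add_mul_eq_mulCothHalf_mul_sub hqp]
  · simp [hpq]
  · linarith [add_mul_eq_mulCothHalf_mul_sub hpq]

namespace PMF

variable {α : Type*}

theorem summable_toReal (P : PMF α) : Summable fun x => (P x).toReal :=
  ENNReal.summable_toReal (P.tsum_coe ▸ ENNReal.one_ne_top)

theorem tsum_toReal (P : PMF α) : ∑' x, (P x).toReal = 1 := by
  rw [← ENNReal.tsum_toReal_eq P.apply_ne_top, P.tsum_coe, ENNReal.toReal_one]

theorem toReal_pos_of_mem_support {P : PMF α} {x : α} (hx : x ∈ P.support) :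
    0 < (P x).toReal :=
  ENNReal.toReal_pos ((P.mem_support_iff x).mp hx) (P.apply_ne_top x)

def LogRatioMemAntipodal (ε : ℝ) (P Q : PMF α) : Prop :=
  ∀ x ∈ P.support, log ((P x).toReal / (Q x).toReal) ∈ ({-ε, 0, ε} : Set ℝ)

theorem LogRatioMemAntipodal.symm {ε : ℝ} {P Q : PMF α} (h : LogRatioMemAntipodal ε P Q)
    (hsupp : P.support = Q.support) : LogRatioMemAntipodal ε Q P := by
  intro x hx
  rw [← inv_div, log_inv]
  obtain h | h | h : _ = -ε ∨ _ = 0 ∨ _ = ε := h x (hsupp ▸ hx) <;> simp [h]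

theorem LogRatioMemAntipodal.summable_kl {ε : ℝ} {P Q : PMF α}
    (h : LogRatioMemAntipodal ε P Q) :
    Summable fun x => (P x).toReal * log ((P x).toReal / (Q x).toReal) := by
  refine Summable.of_norm_bounded (P.summable_toReal.mul_left |ε|) fun x => ?_
  by_cases hx : x ∈ P.support
  · have hlog : |log ((P x).toReal / (Q x).toReal)| ≤ |ε| := by
      obtain h | h | h : _ = -ε ∨ _ = 0 ∨ _ = ε := h x hx <;> simp [h]
    rw [Real.norm_eq_abs, abs_mul, abs_of_nonneg ENNReal.toReal_nonneg, mul_comm]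
    exact mul_le_mul_of_nonneg_right hlog ENNReal.toReal_nonneg
  · simp [(P.apply_eq_zero_iff x).mpr hx]

theorem LogRatioMemAntipodal.kl_term_eq {ε : ℝ} {P Q : PMF α}
    (h : LogRatioMemAntipodal ε P Q) (hsupp : P.support = Q.support) (x : α) :
    (P x).toReal * log ((P x).toReal / (Q x).toReal) =
      (Q x).toReal * log ((Q x).toReal / (P x).toReal) +
        mulCothHalf ε * ((P x).toReal - (Q x).toReal) := by
  by_cases hx : x ∈ P.support
  · exact mul_log_div_eq_of_log_div_mem (toReal_pos_of_mem_support hx)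
      (toReal_pos_of_mem_support (hsupp ▸ hx)) (h x hx)
  · simp [(P.apply_eq_zero_iff x).mpr hx, (Q.apply_eq_zero_iff x).mpr (hsupp ▸ hx)]

end PMF

theorem antipodal_kl_symm_general {α : Type*} (M M' : PMF α) (ε : ℝ)
    (hsupp : M.support = M'.support)
    (hanti : ∀ x ∈ M.support,
      Real.log ((M x).toReal / (M' x).toReal) ∈ ({-ε, 0, ε} : Set ℝ)) :
    KL M M' = KL M' M := by
  replace hanti : M.LogRatioMemAntipodal ε M' := hanti
  have hdiff : Summable fun x => mulCothHalf ε * ((M x).toReal - (M' x).toReal) :=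
    (M.summable_toReal.sub M'.summable_toReal).mul_left _
  calc KL M M'
      = ∑' x, ((M' x).toReal * log ((M' x).toReal / (M x).toReal) +
          mulCothHalf ε * ((M x).toReal - (M' x).toReal)) :=
        tsum_congr (hanti.kl_term_eq hsupp)
    _ = KL M' M + mulCothHalf ε * (1 - 1) := by
        rw [(hanti.symm hsupp).summable_kl.tsum_add hdiff, tsum_mul_left,
          M.summable_toReal.tsum_sub M'.summable_toReal, M.tsum_toReal, M'.tsum_toReal, KL]
    _ = KL M' M := by ring

/-- **Antipodal distributions have symmetric KL divergence.** If `M, M'` are discrete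
distributions on a common countable support that are ε-antipodal for some `ε ≥ 0`
(equal supports, max divergences at most `ε`, and every log-ratio on the support lies in
`{−ε, 0, ε}`), then `D_KL(M‖M') = D_KL(M'‖M)`. -/
theorem antipodal_kl_symm {α : Type*} [Countable α] (M M' : PMF α) (ε : ℝ) (hε : 0 ≤ ε)
    (hsupp : M.support = M'.support)
    (h1 : DinfExp M M' ≤ ENNReal.ofReal (Real.exp ε))
    (h2 : DinfExp M' M ≤ ENNReal.ofReal (Real.exp ε))
    (hanti : ∀ x ∈ M.support,
      Real.log ((M x).toReal / (M' x).toReal) ∈ ({-ε, 0, ε} : Set ℝ)) :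
    KL M M' = KL M' M :=
  antipodal_kl_symm_general M M' ε hsupp hanti
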